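/- arXiv:1905.09394 — 7 statements merged into one kernel-verified Lean document; each statement's English description precedes it below -/
import Mathlib

section
/- Let y : [0,∞) → [0,∞) be continuous with ∫₀^∞ y(τ) dτ ≤ C₁ < ∞. Suppose there exist a nondecreasing function f : [0,∞) → [0,∞) and a non-negative function h with ∫₀^∞ h(τ) dτ ≤ C₂ < ∞ such that for all 0 ≤ s < t, y(t) − y(s) ≤ ∫ₛᵗ f(y(τ)) dτ + ∫ₛᵗ h(τ) dτ. Then lim_{t→∞} y(t) = 0. -/
open MeasureTheory Set Filter

private lemma ii_of_tail (g : ℝ → ℝ) (hg : IntegrableOn g (Ici 0)) {u v : ℝ}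
    (hu : 0 ≤ u) (huv : u ≤ v) : IntervalIntegrable g volume u v := by
  apply (hg.mono_set _).intervalIntegrable
  rw [uIcc_of_le huv]
  intro x hx
  exact hu.trans hx.1

private lemma tail_small (g : ℝ → ℝ) (hg_int : IntegrableOn g (Ici 0))
    (hg_nonneg : ∀ t ∈ Ici (0:ℝ), 0 ≤ g t) {η : ℝ} (hη : 0 < η) :
    ∃ A : ℝ, 0 ≤ A ∧ ∀ s t : ℝ, A ≤ s → s ≤ t → ∫ τ in s..t, g τ ≤ η := by
  have hIoi : IntegrableOn g (Ioi 0) := hg_int.mono_set Ioi_subset_Ici_self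
  set L := ∫ x in Ioi (0:ℝ), g x with hL
  have hlim : Tendsto (fun b => ∫ x in (0:ℝ)..b, g x) atTop (nhds L) :=
    intervalIntegral_tendsto_integral_Ioi 0 hIoi tendsto_id
  have hev : ∀ᶠ b in atTop, L - η < ∫ x in (0:ℝ)..b, g x :=
    hlim.eventually (eventually_gt_nhds (by linarith))
  obtain ⟨A₀, hA₀⟩ := hev.exists_forall_of_atTop
  refine ⟨max A₀ 0, le_max_right _ _, ?_⟩
  intro s t hs hst
  have hs0 : (0:ℝ) ≤ s := le_trans (le_max_right _ _) hs
  have ht0 : (0:ℝ) ≤ t := hs0.trans hst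
  have hadd : (∫ x in (0:ℝ)..s, g x) + ∫ x in s..t, g x = ∫ x in (0:ℝ)..t, g x :=
    intervalIntegral.integral_add_adjacent_intervals
      (ii_of_tail g hg_int le_rfl hs0) (ii_of_tail g hg_int hs0 hst)
  have h0t : ∫ x in (0:ℝ)..t, g x ≤ L := by
    rw [intervalIntegral.integral_of_le ht0]
    apply setIntegral_mono_set hIoi
    · filter_upwards [ae_restrict_mem measurableSet_Ioi] with x hx
      exact hg_nonneg x (mem_Ici.2 (le_of_lt (mem_Ioi.1 hx)))
    · exact (Ioc_subset_Ioi_self).eventuallyLE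
  have h0s : L - η < ∫ x in (0:ℝ)..s, g x := hA₀ s (le_trans (le_max_left _ _) hs)
  linarith

/-- Decay of integrable functions (Lemma 1). -/
theorem decay_of_integrable_functions
    (y h f : ℝ → ℝ) (C₁ C₂ : ℝ)
    (hy_cont : ContinuousOn y (Ici 0))
    (hy_nonneg : ∀ t ∈ Ici (0:ℝ), 0 ≤ y t)
    (hy_int : IntegrableOn y (Ici 0))
    (hy_bound : ∫ τ in Ici (0:ℝ), y τ ≤ C₁)
    (hf_nonneg : ∀ a, 0 ≤ a → 0 ≤ f a)
    (hf_mono : ∀ a b, 0 ≤ a → a ≤ b → f a ≤ f b)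
    (hh_nonneg : ∀ t ∈ Ici (0:ℝ), 0 ≤ h t)
    (hh_int : IntegrableOn h (Ici 0))
    (hh_bound : ∫ τ in Ici (0:ℝ), h τ ≤ C₂)
    (hineq : ∀ s t : ℝ, 0 ≤ s → s < t →
      y t - y s ≤ (∫ τ in s..t, f (y τ)) + ∫ τ in s..t, h τ) :
    Tendsto y atTop (nhds 0) := by
  -- frequently small values of y
  have freq_small : ∀ c : ℝ, 0 < c → ∀ B : ℝ, 0 ≤ B → ∃ s, B ≤ s ∧ y s ≤ c := by
    intro c hc B hB
    obtain ⟨A, hA0, hA⟩ := tail_small y hy_int hy_nonneg (half_pos hc)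
    by_contra hno
    push_neg at hno
    set s := max A B with hsdef
    have hs0 : 0 ≤ s := hA0.trans (le_max_left _ _)
    have h1 : ∫ τ in s..(s+1), y τ ≤ c/2 := hA s (s+1) (le_max_left _ _) (by linarith)
    have h2 : (s+1-s) * c ≤ ∫ τ in s..(s+1), y τ := by
      have hm := intervalIntegral.integral_mono_on (by linarith : s ≤ s+1)
        intervalIntegrable_const (ii_of_tail y hy_int hs0 (by linarith))
        (fun x hx => (hno x (le_trans (le_max_right _ _) hx.1)).le)
      simpa [intervalIntegral.integral_const, smul_eq_mul, mul_comm] using hm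
    have : (s+1-s) * c = c := by ring
    linarith
  rw [Metric.tendsto_atTop]
  intro ε hε
  by_contra hcon
  push_neg at hcon
  have hfε : 0 ≤ f ε := hf_nonneg ε hε.le
  set F := f ε + 1 with hFdef
  have hFpos : 0 < F := by linarith
  set δ := ε / (4 * F) with hδdef
  have hδ : 0 < δ := by positivity
  obtain ⟨A₁, hA₁0, hA₁⟩ := tail_small h hh_int hh_nonneg (show (0:ℝ) < ε/4 by linarith)
  obtain ⟨A₂, hA₂0, hA₂⟩ := tail_small y hy_int hy_nonneg (show (0:ℝ) < ε*δ/8 by positivity)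
  obtain ⟨s₀, hs₀A, hs₀y⟩ := freq_small (ε/2) (by linarith) (max A₁ A₂)
    (hA₁0.trans (le_max_left _ _))
  have hs₀0 : 0 ≤ s₀ := (hA₁0.trans (le_max_left _ _)).trans hs₀A
  obtain ⟨t, hts₀, htd⟩ := hcon s₀
  have ht0 : 0 ≤ t := hs₀0.trans hts₀
  have hyt : ε ≤ y t := by
    rwa [Real.dist_eq, sub_zero, abs_of_nonneg (hy_nonneg t ht0)] at htd
  -- the last time before t where y ≤ ε/2
  have hIccsub : Icc s₀ t ⊆ Ici (0:ℝ) := fun x hx => hs₀0.trans hx.1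
  have hScl : IsClosed (Icc s₀ t ∩ y ⁻¹' Iic (ε/2)) :=
    (hy_cont.mono hIccsub).preimage_isClosed_of_isClosed isClosed_Icc isClosed_Iic
  have hScpt : IsCompact (Icc s₀ t ∩ y ⁻¹' Iic (ε/2)) :=
    isCompact_Icc.of_isClosed_subset hScl inter_subset_left
  have hSne : (Icc s₀ t ∩ y ⁻¹' Iic (ε/2)).Nonempty := ⟨s₀, ⟨le_rfl, hts₀⟩, hs₀y⟩
  obtain ⟨s, ⟨⟨hss₀, hst⟩, hsy⟩, hs_ub⟩ :
      ∃ s, (s ∈ Icc s₀ t ∧ y s ≤ ε/2) ∧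
        ∀ σ ∈ Icc s₀ t ∩ y ⁻¹' Iic (ε/2), σ ≤ s :=
    ⟨_, hScpt.sSup_mem hSne, fun σ hσ => le_csSup hScpt.bddAbove hσ⟩
  have hs0 : 0 ≤ s := hs₀0.trans hss₀
  have hslt : s < t := by
    rcases eq_or_lt_of_le hst with he | hl
    · exfalso; rw [he] at hsy; linarith
    · exact hl
  have hgt : ∀ σ, s < σ → σ ≤ t → ε/2 < y σ := by
    intro σ h1 h2
    by_contra hle
    push_neg at hle
    have hmem : σ ∈ Icc s₀ t ∩ y ⁻¹' Iic (ε/2) := ⟨⟨hss₀.trans h1.le, h2⟩, hle⟩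
    exact absurd (hs_ub σ hmem) (not_le.2 h1)
  have hys_ge : ε/2 ≤ y s := by
    have hcw : ContinuousWithinAt y (Ioi s) s :=
      (hy_cont s hs0).mono (fun x hx => hs0.trans (le_of_lt hx))
    refine ge_of_tendsto hcw ?_
    filter_upwards [Ioc_mem_nhdsGT_of_mem (⟨le_rfl, hslt⟩ : s ∈ Ico s t)] with σ hσ
    exact (hgt σ hσ.1 hσ.2).le
  -- the first time after s where y ≥ ε
  have hIccsub' : Icc s t ⊆ Ici (0:ℝ) := fun x hx => hs0.trans hx.1
  have hTcl : IsClosed (Icc s t ∩ y ⁻¹' Ici ε) :=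
    (hy_cont.mono hIccsub').preimage_isClosed_of_isClosed isClosed_Icc isClosed_Ici
  have hTcpt : IsCompact (Icc s t ∩ y ⁻¹' Ici ε) :=
    isCompact_Icc.of_isClosed_subset hTcl inter_subset_left
  have hTne : (Icc s t ∩ y ⁻¹' Ici ε).Nonempty := ⟨t, ⟨hslt.le, le_rfl⟩, hyt⟩
  obtain ⟨u, ⟨⟨hsu, hut⟩, hyu⟩, hu_lb⟩ :
      ∃ u, (u ∈ Icc s t ∧ ε ≤ y u) ∧
        ∀ σ ∈ Icc s t ∩ y ⁻¹' Ici ε, u ≤ σ :=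
    ⟨_, hTcpt.sInf_mem hTne, fun σ hσ => csInf_le hTcpt.bddBelow hσ⟩
  have hu0 : 0 ≤ u := hs0.trans hsu
  have hslu : s < u := by
    rcases eq_or_lt_of_le hsu with he | hl
    · exfalso; rw [← he] at hyu; linarith
    · exact hl
  have hlt : ∀ σ, s ≤ σ → σ < u → y σ < ε := by
    intro σ h1 h2
    by_contra hge
    push_neg at hge
    have hmem : σ ∈ Icc s t ∩ y ⁻¹' Ici ε := ⟨⟨h1, h2.le.trans hut⟩, hge⟩
    exact absurd (hu_lb σ hmem) (not_le.2 h2)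
  have hyu_le : y u ≤ ε := by
    have hcw : ContinuousWithinAt y (Ico s u) u :=
      (hy_cont u hu0).mono (fun x hx => hs0.trans hx.1)
    have hmemcl : u ∈ closure (Ico s u) := by
      rw [closure_Ico hslu.ne]
      exact ⟨hsu, le_rfl⟩
    haveI : (nhdsWithin u (Ico s u)).NeBot := mem_closure_iff_nhdsWithin_neBot.1 hmemcl
    refine le_of_tendsto hcw ?_
    filter_upwards [self_mem_nhdsWithin] with σ hσ
    exact (hlt σ hσ.1 hσ.2).le
  -- bounds on [s,u]
  have hy_ub : ∀ σ ∈ Icc s u, y σ ≤ ε := by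
    intro σ hσ
    rcases eq_or_lt_of_le hσ.2 with he | hl
    · rw [he]; exact hyu_le
    · exact (hlt σ hσ.1 hl).le
  have hy_lb : ∀ σ ∈ Icc s u, ε/2 ≤ y σ := by
    intro σ hσ
    rcases eq_or_lt_of_le hσ.1 with he | hl
    · rw [← he]; exact hys_ge
    · exact (hgt σ hl (hσ.2.trans hut)).le
  -- integral estimates
  have hmaxs : max A₁ A₂ ≤ s := hs₀A.trans hss₀
  have e1 : (u - s) * ε / 2 ≤ ∫ τ in s..u, y τ := by
    have hm := intervalIntegral.integral_mono_on hslu.le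
      intervalIntegrable_const (ii_of_tail y hy_int hs0 hslu.le) hy_lb
    simpa [intervalIntegral.integral_const, smul_eq_mul] using hm
  have e2 : ∫ τ in s..u, y τ ≤ ε*δ/8 :=
    hA₂ s u ((le_max_right A₁ A₂).trans hmaxs) hslu.le
  have e3 : ∫ τ in s..u, h τ ≤ ε/4 :=
    hA₁ s u ((le_max_left A₁ A₂).trans hmaxs) hslu.le
  have e4 : ∫ τ in s..u, f (y τ) ≤ (u - s) * f ε := by
    by_cases hI : IntervalIntegrable (fun τ => f (y τ)) volume s u
    · have hm := intervalIntegral.integral_mono_on hslu.le hI intervalIntegrable_const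
        (fun x hx => hf_mono (y x) ε (hy_nonneg x (hs0.trans hx.1)) (hy_ub x hx))
      simpa [intervalIntegral.integral_const, smul_eq_mul] using hm
    · rw [intervalIntegral.integral_undef hI]
      exact mul_nonneg (by linarith) hfε
  have e5 := hineq s u hs0 hslu
  have e7 : ε/4 ≤ (u - s) * f ε := by linarith
  have e8 : δ ≤ u - s := by
    rw [hδdef, div_le_iff₀ (by positivity)]
    nlinarith [sub_nonneg.2 hslu.le]
  nlinarith [mul_pos hε hδ]
end

section
/- Let m, n ∈ (0,1) with n > m, and define f(x) = (1/n)(1+x)^n − (1/m)(1+x)^m + (n−m)/(mn) for x ∈ (−1, ∞). Then f(x) ≥ 0 for all x ∈ (−1, ∞), and f(x) = 0 if and only if x = 0. -/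
/-- Lemma 6: `f(x) = (1/n)(1+x)^n - (1/m)(1+x)^m + (n-m)/(mn)` is non-negative
on `(-1, ∞)` and vanishes iff `x = 0`. -/
theorem lemma6_nonneg (m n : ℝ) (hm : 0 < m) (hmn : m < n) (hn : n < 1)
    (x : ℝ) (hx : -1 < x) :
    0 ≤ (1/n) * (1 + x) ^ n - (1/m) * (1 + x) ^ m + (n - m) / (m * n) ∧
    ((1/n) * (1 + x) ^ n - (1/m) * (1 + x) ^ m + (n - m) / (m * n) = 0 ↔ x = 0) := by
  have hn0 : 0 < n := hm.trans hmn
  have ht : (0:ℝ) < 1 + x := by linarith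
  by_cases hx0 : x = 0
  · subst hx0
    simp only [add_zero, Real.one_rpow]
    constructor
    · have : (1/n) * 1 - (1/m) * 1 + (n - m) / (m * n) = 0 := by
        field_simp; ring
      linarith
    · constructor
      · intro _; trivial
      · intro _; field_simp; ring
  · -- strict case
    have hpos : 0 < (1/n) * (1 + x) ^ n - (1/m) * (1 + x) ^ m + (n - m) / (m * n) := by
      set t : ℝ := 1 + x with htdef
      have htn : (0:ℝ) < t ^ n := Real.rpow_pos_of_pos ht n
      have hs : -1 ≤ t ^ n - 1 := by linarith
      have ht1 : t ≠ 1 := by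
        intro h; apply hx0; linarith [h]
      have hs0 : t ^ n - 1 ≠ 0 := by
        intro h
        have h1 : t ^ n = 1 := by linarith
        rcases lt_trichotomy t 1 with h2 | h2 | h2
        · have := Real.rpow_lt_one ht.le h2 hn0
          linarith
        · exact ht1 h2
        · have := Real.one_lt_rpow_iff_of_pos ht |>.mpr (Or.inl ⟨h2, hn0⟩)
          linarith
      have hp1 : 0 < m / n := div_pos hm hn0
      have hp2 : m / n < 1 := (div_lt_one hn0).mpr hmn
      have key := rpow_one_add_lt_one_add_mul_self hs hs0 hp1 hp2
      rw [show (1 : ℝ) + (t ^ n - 1) = t ^ n by ring] at key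
      rw [← Real.rpow_mul ht.le, mul_div_cancel₀ m hn0.ne'] at key
      have hmn0 : (0:ℝ) < m * n := by positivity
      have heq : (1/n) * t ^ n - (1/m) * t ^ m + (n - m) / (m * n)
          = (m * t ^ n - n * t ^ m + (n - m)) / (m * n) := by
        field_simp
      rw [heq]
      apply div_pos _ hmn0
      have key2 : t ^ m * n < (1 + m / n * (t ^ n - 1)) * n :=
        mul_lt_mul_of_pos_right key hn0
      have : (1 + m / n * (t ^ n - 1)) * n = n + m * (t ^ n - 1) := by
        field_simp
      nlinarith [key2]
    constructor
    · exact hpos.le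
    · constructor
      · intro h; linarith
      · intro h; exact absurd h hx0
end

section
/- Let m, n ∈ (0,1) with n > m > n/2, and define g(x) = −(((1+x)^{m/2} − 1)² + ((1+x)^{n/2} − 1)²) + n·((1/n)(1+x)^n − (1/m)(1+x)^m + (n−m)/(mn)) for x ∈ (−1, ∞). Then g(x) ≤ 0 for all x ∈ (−1, ∞), with equality if and only if x = 0. -/
lemma lemma7_aux (m n A B : ℝ) (hm : 0 < m) (hn0 : 0 < n)
    (hkey2 : 2 * m * B - 2 * m - n * (A ^ 2 - 1) ≤ 0) :
    (-((A - 1)^2 + (B - 1)^2) + n * ((1/n) * B^2 - (1/m) * A^2 + (n - m) / (m * n)) ≤ 0) ∧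
    ((-((A - 1)^2 + (B - 1)^2) + n * ((1/n) * B^2 - (1/m) * A^2 + (n - m) / (m * n)) = 0) → A = 1) := by
  have hmg : m * (-((A - 1)^2 + (B - 1)^2)
      + n * ((1/n) * B^2 - (1/m) * A^2 + (n - m) / (m * n)))
      = -(m * (A - 1)^2) + (2 * m * B - 2 * m - n * (A ^ 2 - 1)) := by
    field_simp
    ring
  have hAsq : 0 ≤ m * (A - 1)^2 := by positivity
  have hmE : m * (-((A - 1)^2 + (B - 1)^2)
      + n * ((1/n) * B^2 - (1/m) * A^2 + (n - m) / (m * n))) ≤ 0 := by linarith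
  constructor
  · have := (mul_le_mul_iff_right₀ hm).mp (by rwa [mul_zero] : m * (-((A - 1)^2 + (B - 1)^2)
      + n * ((1/n) * B^2 - (1/m) * A^2 + (n - m) / (m * n))) ≤ m * 0)
    exact this
  · intro h0
    rw [h0, mul_zero] at hmg
    have h1 : m * (A - 1)^2 ≤ 0 := by linarith
    have h2 : (A - 1)^2 = 0 := by
      have := le_antisymm h1 hAsq
      rcases mul_eq_zero.mp this with h | h
      · exact absurd h hm.ne'
      · exact h
    have := pow_eq_zero_iff (n := 2) (by norm_num) |>.mp h2
    linarith [sub_eq_zero.mp this]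

/-- Lemma 7: `g` is non-positive on `(-1, ∞)`, with equality iff `x = 0`. -/
theorem lemma7_nonpos (m n : ℝ) (hm : 0 < m) (hmn : m < n) (hn : n < 1)
    (hm2 : n / 2 < m) (x : ℝ) (hx : -1 < x) :
    (-(((1 + x) ^ (m/2) - 1)^2 + ((1 + x) ^ (n/2) - 1)^2)
      + n * ((1/n) * (1 + x) ^ n - (1/m) * (1 + x) ^ m + (n - m) / (m * n)) ≤ 0) ∧
    ((-(((1 + x) ^ (m/2) - 1)^2 + ((1 + x) ^ (n/2) - 1)^2)
      + n * ((1/n) * (1 + x) ^ n - (1/m) * (1 + x) ^ m + (n - m) / (m * n)) = 0) ↔ x = 0) := by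
  have ht : (0:ℝ) < 1 + x := by linarith
  have hn0 : 0 < n := lt_trans hm hmn
  have hA0 : 0 < (1 + x) ^ (m/2) := Real.rpow_pos_of_pos ht _
  have hta : (1 + x) ^ m = ((1 + x) ^ (m/2)) ^ 2 := by
    rw [← Real.rpow_natCast ((1 + x) ^ (m/2)) 2, ← Real.rpow_mul ht.le]
    norm_num
  have htb : (1 + x) ^ n = ((1 + x) ^ (n/2)) ^ 2 := by
    rw [← Real.rpow_natCast ((1 + x) ^ (n/2)) 2, ← Real.rpow_mul ht.le]
    norm_num
  -- Bernoulli
  have hBa : (1 + x) ^ (n/2)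
      = (1 + (((1 + x) ^ (m/2)) ^ 2 - 1)) ^ (n / (2 * m)) := by
    rw [add_sub_cancel, ← hta, ← Real.rpow_mul ht.le]
    congr 1
    field_simp
  have hs : (-1 : ℝ) ≤ ((1 + x) ^ (m/2)) ^ 2 - 1 := by nlinarith [sq_nonneg ((1 + x) ^ (m/2))]
  have hp1 : (0:ℝ) ≤ n / (2 * m) := by positivity
  have hp2 : n / (2 * m) ≤ 1 := by
    rw [div_le_one (by positivity)]; linarith
  have hkey : (1 + x) ^ (n/2) ≤ 1 + (n / (2 * m)) * (((1 + x) ^ (m/2)) ^ 2 - 1) := by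
    rw [hBa]
    exact rpow_one_add_le_one_add_mul_self hs hp1 hp2
  have hkey2 : 2 * m * ((1 + x) ^ (n/2)) - 2 * m - n * (((1 + x) ^ (m/2)) ^ 2 - 1) ≤ 0 := by
    have h := mul_le_mul_of_nonneg_left hkey (by positivity : (0:ℝ) ≤ 2 * m)
    have h2 : 2 * m * (1 + n / (2 * m) * (((1 + x) ^ (m/2)) ^ 2 - 1))
        = 2 * m + n * (((1 + x) ^ (m/2)) ^ 2 - 1) := by
      field_simp
    linarith [h2 ▸ h]
  have haux := lemma7_aux m n ((1 + x) ^ (m/2)) ((1 + x) ^ (n/2)) hm hn0 hkey2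
  rw [hta, htb]
  refine ⟨haux.1, ⟨fun hG0 => ?_, fun hx0 => ?_⟩⟩
  · have hA2 := haux.2 hG0
    have hlog : (m / 2) * Real.log (1 + x) = 0 := by
      rw [← Real.log_rpow ht, hA2, Real.log_one]
    have hlt : Real.log (1 + x) = 0 := by
      rcases mul_eq_zero.mp hlog with h | h
      · exact absurd h (by positivity)
      · exact h
    rcases Real.log_eq_zero.mp hlt with h | h | h
    · linarith
    · linarith
    · linarith
  · subst hx0
    norm_num [Real.one_rpow]
    field_simp
    right
    ring
end

section
/- Let m, n ∈ (0,1) with n > m > n/2, and g(x) = −(((1+x)^{m/2} − 1)² + ((1+x)^{n/2} − 1)²) + n·((1/n)(1+x)^n − (1/m)(1+x)^m + (n−m)/(mn)). Then for all x > −1, g'(x) = (m(1+x)^{m/2}(1−(1+x)^{m/2}) + n(1+x)^{n/2}(1−(1+x)^{m−n/2}))/(1+x); in particular g'(x) < 0 for x > 0 and g'(x) > 0 for −1 < x < 0. -/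
lemma rpow_hasDerivAt (p x : ℝ) (hx : (0:ℝ) < 1 + x) :
    HasDerivAt (fun x : ℝ => (1 + x) ^ p) (p * (1 + x) ^ (p - 1)) x := by
  have h1 : HasDerivAt (fun x : ℝ => 1 + x) 1 x := (hasDerivAt_id x).const_add 1
  have h2 := (Real.hasDerivAt_rpow_const (x := 1 + x) (p := p) (Or.inl hx.ne')).comp x h1
  rw [mul_one] at h2
  exact h2

/-- Derivative of `g` and its sign. -/
theorem lemma7_deriv (m n : ℝ) (hm : 0 < m) (hmn : m < n) (hn : n < 1)
    (hm2 : n / 2 < m) (x : ℝ) (hx : -1 < x) :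
    HasDerivAt (fun x : ℝ => -(((1 + x) ^ (m/2) - 1)^2 + ((1 + x) ^ (n/2) - 1)^2)
        + n * ((1/n) * (1 + x) ^ n - (1/m) * (1 + x) ^ m + (n - m) / (m * n)))
      ((m * (1 + x) ^ (m/2) * (1 - (1 + x) ^ (m/2))
        + n * (1 + x) ^ (n/2) * (1 - (1 + x) ^ (m - n/2))) / (1 + x)) x ∧
    (0 < x → (m * (1 + x) ^ (m/2) * (1 - (1 + x) ^ (m/2))
        + n * (1 + x) ^ (n/2) * (1 - (1 + x) ^ (m - n/2))) / (1 + x) < 0) ∧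
    (x < 0 → 0 < (m * (1 + x) ^ (m/2) * (1 - (1 + x) ^ (m/2))
        + n * (1 + x) ^ (n/2) * (1 - (1 + x) ^ (m - n/2))) / (1 + x)) := by
  have hy : (0:ℝ) < 1 + x := by linarith
  refine ⟨?_, ?_, ?_⟩
  · -- derivative
    have hA := ((rpow_hasDerivAt (m/2) x hy).sub_const 1).pow 2
    have hB := ((rpow_hasDerivAt (n/2) x hy).sub_const 1).pow 2
    have hC := ((((rpow_hasDerivAt n x hy).const_mul (1/n)).sub
        ((rpow_hasDerivAt m x hy).const_mul (1/m))).add_const ((n - m)/(m*n))).const_mul n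
    have hD := ((hA.add hB).neg).add hC
    refine hD.congr_deriv ?_
    symm
    have e1 : (1+x) ^ (m/2) * (1+x) ^ (m/2) = (1+x) ^ m := by
      rw [← Real.rpow_add hy]; ring_nf
    have e2 : (1+x) ^ (n/2) * (1+x) ^ (m - n/2) = (1+x) ^ m := by
      rw [← Real.rpow_add hy]; ring_nf
    have e7 : (1+x) ^ (n/2) * (1+x) ^ (n/2) = (1+x) ^ n := by
      rw [← Real.rpow_add hy]; ring_nf
    have e3 : (1+x) ^ (m/2 - 1) = (1+x) ^ (m/2) / (1+x) := by
      rw [Real.rpow_sub hy, Real.rpow_one]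
    have e4 : (1+x) ^ (n/2 - 1) = (1+x) ^ (n/2) / (1+x) := by
      rw [Real.rpow_sub hy, Real.rpow_one]
    have e5 : (1+x) ^ (m - 1) = (1+x) ^ m / (1+x) := by
      rw [Real.rpow_sub hy, Real.rpow_one]
    have e6 : (1+x) ^ (n - 1) = (1+x) ^ n / (1+x) := by
      rw [Real.rpow_sub hy, Real.rpow_one]
    rw [e3, e4, e5, e6]
    set A := (1+x) ^ (m/2) with hA'
    set B := (1+x) ^ (n/2) with hB'
    set C := (1+x) ^ (m - n/2) with hC'
    set D := (1+x) ^ m with hD'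
    set E := (1+x) ^ n with hE'
    have hn0 : n ≠ 0 := by linarith
    have hm0 : m ≠ 0 := hm.ne'
    field_simp
    ring_nf
    linear_combination 2 * n * (e7 - e2)
  · intro hx0
    have hy1 : (1:ℝ) < 1 + x := by linarith
    have h1 : 1 < (1+x) ^ (m/2) :=
      (Real.one_lt_rpow_iff_of_pos hy).2 (Or.inl ⟨hy1, by linarith⟩)
    have h2 : 1 < (1+x) ^ (m - n/2) :=
      (Real.one_lt_rpow_iff_of_pos hy).2 (Or.inl ⟨hy1, by linarith⟩)
    have h3 : 0 < (1+x) ^ (m/2) := Real.rpow_pos_of_pos hy _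
    have h4 : 0 < (1+x) ^ (n/2) := Real.rpow_pos_of_pos hy _
    apply div_neg_of_neg_of_pos _ hy
    have t1 : m * (1+x) ^ (m/2) * (1 - (1+x) ^ (m/2)) < 0 :=
      mul_neg_of_pos_of_neg (mul_pos hm h3) (by linarith)
    have t2 : n * (1+x) ^ (n/2) * (1 - (1+x) ^ (m - n/2)) < 0 :=
      mul_neg_of_pos_of_neg (mul_pos (by linarith) h4) (by linarith)
    linarith
  · intro hx0
    have hy1 : 1 + x < 1 := by linarith
    have h1 : (1+x) ^ (m/2) < 1 := Real.rpow_lt_one hy.le hy1 (by linarith)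
    have h2 : (1+x) ^ (m - n/2) < 1 := Real.rpow_lt_one hy.le hy1 (by linarith)
    have h3 : 0 < (1+x) ^ (m/2) := Real.rpow_pos_of_pos hy _
    have h4 : 0 < (1+x) ^ (n/2) := Real.rpow_pos_of_pos hy _
    apply div_pos _ hy
    have t1 : 0 < m * (1+x) ^ (m/2) * (1 - (1+x) ^ (m/2)) :=
      mul_pos (mul_pos hm h3) (by linarith)
    have t2 : 0 < n * (1+x) ^ (n/2) * (1 - (1+x) ^ (m - n/2)) :=
      mul_pos (mul_pos (by linarith) h4) (by linarith)
    linarith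
end

section
/- Let m, n ∈ (0,1) with n > m, and let l be a natural number with l ≥ 2. Then for all x ≥ 0, ((n^{l−1} − m^{l−1})/l!)·x^l ≤ (1/n)e^{nx} − (1/m)e^{mx} + (n−m)/(mn), with equality if and only if x = 0. -/
/-- For `x ≥ 0` and `l ≥ 2`:
`((n^{l-1} - m^{l-1})/l!) x^l ≤ (1/n)e^{nx} - (1/m)e^{mx} + (n-m)/(mn)`,
with equality iff `x = 0`. -/
theorem poly_le_f (m n : ℝ) (hm : 0 < m) (hmn : m < n) (hn : n < 1)
    (l : ℕ) (hl : 2 ≤ l) (x : ℝ) (hx : 0 ≤ x) :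
    ((n ^ (l - 1) - m ^ (l - 1)) / (Nat.factorial l : ℝ)) * x ^ l ≤
      (1/n) * Real.exp (n * x) - (1/m) * Real.exp (m * x) + (n - m) / (m * n) ∧
    (((n ^ (l - 1) - m ^ (l - 1)) / (Nat.factorial l : ℝ)) * x ^ l =
      (1/n) * Real.exp (n * x) - (1/m) * Real.exp (m * x) + (n - m) / (m * n) ↔ x = 0) := by
  have hn0 : (0:ℝ) < n := hm.trans hmn
  set c : ℕ → ℝ := fun k => (n ^ (k - 1) - m ^ (k - 1)) * x ^ k / (Nat.factorial k) with hcdef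
  set g : ℕ → ℝ := fun k => (n*x)^k / (Nat.factorial k) * (1/n) - (m*x)^k / (Nat.factorial k) * (1/m) with hgdef
  have hg : Summable g :=
    ((Real.summable_pow_div_factorial (n*x)).mul_right _).sub
      ((Real.summable_pow_div_factorial (m*x)).mul_right _)
  have hcg : ∀ k, c (k+1) = g (k+1) := by
    intro k
    simp only [hcdef, hgdef, Nat.add_sub_cancel, mul_pow, pow_succ]
    field_simp
  have hc : Summable c := by
    rw [← summable_nat_add_iff 1]
    exact (Summable.congr ((summable_nat_add_iff 1).mpr hg) (fun k => (hcg k).symm))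
  have hexp : ∀ y : ℝ, Real.exp y = ∑' k : ℕ, y ^ k / (Nat.factorial k) := by
    intro y
    rw [Real.exp_eq_exp_ℝ, NormedSpace.exp_eq_tsum_div]
  have htg : ∑' k, g k = (1/n) * Real.exp (n*x) - (1/m) * Real.exp (m*x) := by
    rw [hexp, hexp]
    rw [hgdef]
    rw [Summable.tsum_sub ((Real.summable_pow_div_factorial (n*x)).mul_right _)
      ((Real.summable_pow_div_factorial (m*x)).mul_right _),
      tsum_mul_right, tsum_mul_right]
    ring
  have htsum : ∑' k, c k = (1/n) * Real.exp (n * x) - (1/m) * Real.exp (m * x) + (n - m) / (m * n) := by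
    rw [Summable.tsum_eq_zero_add hc, Summable.tsum_eq_zero_add hg] at *
    have h0 : c 0 = 0 := by simp [hcdef]
    have hg0 : g 0 = 1/n - 1/m := by simp [hgdef]
    have : ∑' k, c (k+1) = ∑' k, g (k+1) := tsum_congr hcg
    rw [h0, this, zero_add]
    have := htg
    rw [hg0] at this
    rw [← sub_eq_iff_eq_add'.mpr this.symm] at *
    field_simp
    ring
  have hnonneg : ∀ k, 0 ≤ c k := by
    intro k
    apply div_nonneg _ (Nat.cast_nonneg _)
    exact mul_nonneg (sub_nonneg.mpr (pow_le_pow_left₀ hm.le hmn.le _)) (pow_nonneg hx _)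
  have hlhs : ((n ^ (l - 1) - m ^ (l - 1)) / (Nat.factorial l : ℝ)) * x ^ l = c l := by
    rw [hcdef]; ring
  have hle : c l ≤ ∑' k, c k := Summable.le_tsum hc l (fun j _ => hnonneg j)
  constructor
  · rw [hlhs, ← htsum]; exact hle
  constructor
  · intro heq
    by_contra hx0
    have hxpos : 0 < x := lt_of_le_of_ne hx (Ne.symm hx0)
    set j : ℕ := if l = 2 then 3 else 2 with hj
    have hjl : j ≠ l := by
      rcases eq_or_ne l 2 with h | h <;> simp [hj, h]
      omega
    have hcj : 0 < c j := by
      have hj1 : j - 1 ≠ 0 := by rcases eq_or_ne l 2 with h | h <;> simp [hj, h]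
      apply div_pos _ (by positivity)
      exact mul_pos (sub_pos.mpr (pow_lt_pow_left₀ hmn hm.le hj1)) (pow_pos hxpos _)
    have hsum2 : c l + c j ≤ ∑' k, c k := by
      have := Summable.sum_le_tsum ({l, j} : Finset ℕ) (fun k _ => hnonneg k) hc
      rwa [Finset.sum_pair (Ne.symm hjl)] at this
    rw [hlhs, ← htsum] at heq
    linarith
  · intro h
    subst h
    have hl0 : l ≠ 0 := by omega
    rw [mul_zero, mul_zero, Real.exp_zero, zero_pow hl0, mul_zero]
    field_simp
    ring
end

section
/- Let m, n ∈ (0,1) with n > m > n/2, let f(x) = (1/n)e^{nx} − (1/m)e^{mx} + (n−m)/(mn), let x_crit < 0 be arbitrary and let l ∈ ℕ with l ≥ 3. Then there exists a constant L > 0 such that |x|^l / L ≤ f(x) for all x ∈ [x_crit, ∞). -/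
open Real

/-- Quadratic lower bound for `f` on `[xcrit, ∞)`. -/
lemma lemma9_quad (m n : ℝ) (hm : 0 < m) (hmn : m < n) (xcrit : ℝ) (hxc : xcrit < 0) :
    ∀ x : ℝ, xcrit ≤ x →
      (n - m) * Real.exp (n * xcrit) / 2 * x ^ 2 ≤
        (1/n) * Real.exp (n * x) - (1/m) * Real.exp (m * x) + (n - m) / (m * n) := by
  have hn : 0 < n := hm.trans hmn
  set c : ℝ := (n - m) * Real.exp (n * xcrit) / 2 with hc
  set g : ℝ → ℝ := fun x =>
    (1/n) * Real.exp (n * x) - (1/m) * Real.exp (m * x) + (n - m) / (m * n) - c * x ^ 2 with hgdef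
  have hg : ∀ x : ℝ, HasDerivAt g (Real.exp (n * x) - Real.exp (m * x) - 2 * c * x) x := by
    intro x
    have h1 : HasDerivAt (fun x : ℝ => n * x) n x := by
      simpa using (hasDerivAt_id x).const_mul n
    have h2 : HasDerivAt (fun x : ℝ => m * x) m x := by
      simpa using (hasDerivAt_id x).const_mul m
    have h3 := ((Real.hasDerivAt_exp (n * x)).comp x h1).const_mul (1/n)
    have h4 := ((Real.hasDerivAt_exp (m * x)).comp x h2).const_mul (1/m)
    have h5 := (hasDerivAt_pow 2 x).const_mul c
    have := ((h3.sub h4).add_const ((n - m) / (m * n))).sub h5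
    convert this using 1
    · rfl
    · rfl
    · rfl
    rw [mul_comm (rexp (n * x)) n, mul_comm (rexp (m * x)) m, ← mul_assoc, ← mul_assoc,
      one_div_mul_cancel hn.ne', one_div_mul_cancel hm.ne']
    norm_num
    ring
  have hdiff : Differentiable ℝ g := fun x => (hg x).differentiableAt
  have hderiv : ∀ x : ℝ, deriv g x = Real.exp (n * x) - Real.exp (m * x) - 2 * c * x :=
    fun x => (hg x).deriv
  have hg0 : g 0 = 0 := by
    simp only [hgdef]
    field_simp
    simp only [mul_zero, zero_mul, Real.exp_zero]; ring
  have hcpos : 0 < c := by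
    have := Real.exp_pos (n * xcrit)
    rw [hc]
    have hnm : (0:ℝ) < n - m := by linarith
    positivity
  have key : ∀ x : ℝ, xcrit ≤ x → 0 ≤ g x := by
    intro x hx
    rcases le_or_gt 0 x with h0 | h0
    · -- monotone on [0, ∞)
      have hmono : MonotoneOn g (Set.Ici (0:ℝ)) := by
        apply monotoneOn_of_deriv_nonneg (convex_Ici 0) hdiff.continuous.continuousOn
          hdiff.differentiableOn
        intro x hx
        rw [interior_Ici] at hx
        rw [hderiv]
        have hx0 : (0:ℝ) < x := hx
        have e1 : Real.exp (m * x) * ((n - m) * x) ≤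
            Real.exp (m * x) * (Real.exp ((n - m) * x) - 1) := by
          apply mul_le_mul_of_nonneg_left _ (Real.exp_nonneg _)
          linarith [Real.add_one_le_exp ((n - m) * x)]
        have e2 : (1:ℝ) ≤ Real.exp (m * x) := Real.one_le_exp (by positivity)
        have hnmx : (0:ℝ) ≤ (n - m) * x := by nlinarith
        have e3 : (n - m) * x ≤ Real.exp (m * x) * ((n - m) * x) := by
          calc (n - m) * x = 1 * ((n - m) * x) := by ring
            _ ≤ Real.exp (m * x) * ((n - m) * x) := mul_le_mul_of_nonneg_right e2 hnmx
        have e4 : Real.exp (m * x) * (Real.exp ((n - m) * x) - 1)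
            = Real.exp (n * x) - Real.exp (m * x) := by
          rw [mul_sub, ← Real.exp_add]; ring_nf
        have e5 : 2 * c ≤ n - m := by
          have : Real.exp (n * xcrit) ≤ 1 := Real.exp_le_one_iff.mpr (by nlinarith)
          rw [hc]; nlinarith
        nlinarith
      have h01 : (0:ℝ) ∈ Set.Ici (0:ℝ) := Set.self_mem_Ici
      have := hmono h01 (Set.mem_Ici.mpr h0) h0
      rw [hg0] at this; exact this
    · -- antitone on [xcrit, 0]
      have hanti : AntitoneOn g (Set.Icc xcrit 0) := by
        apply antitoneOn_of_deriv_nonpos (convex_Icc xcrit 0) hdiff.continuous.continuousOn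
          hdiff.differentiableOn
        intro x hx
        rw [interior_Icc] at hx
        obtain ⟨hx1, hx2⟩ := hx
        rw [hderiv]
        have e4 : Real.exp (n * x) * (Real.exp ((m - n) * x) - 1)
            = Real.exp (m * x) - Real.exp (n * x) := by
          rw [mul_sub, ← Real.exp_add]; ring_nf
        have e1 : Real.exp (n * x) * ((m - n) * x) ≤
            Real.exp (n * x) * (Real.exp ((m - n) * x) - 1) := by
          apply mul_le_mul_of_nonneg_left _ (Real.exp_nonneg _)
          linarith [Real.add_one_le_exp ((m - n) * x)]
        have e2 : Real.exp (n * xcrit) ≤ Real.exp (n * x) :=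
          Real.exp_le_exp.mpr (by nlinarith)
        have hnn : 0 ≤ (m - n) * x := by nlinarith
        have e3 : Real.exp (n * xcrit) * ((m - n) * x) ≤ Real.exp (n * x) * ((m - n) * x) :=
          mul_le_mul_of_nonneg_right e2 hnn
        have e5 : 2 * c * x = - (Real.exp (n * xcrit) * ((n - m) * (-x))) := by
          rw [hc]; ring
        nlinarith
      have hxmem : x ∈ Set.Icc xcrit 0 := ⟨hx, h0.le⟩
      have h0mem : (0:ℝ) ∈ Set.Icc xcrit 0 := ⟨hxc.le, le_refl 0⟩
      have := hanti hxmem h0mem h0.le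
      rw [hg0] at this; exact this
  intro x hx
  have := key x hx
  simp only [hgdef] at this
  linarith

/-- Lemma 9: there is `L > 0` with `|x|^l / L ≤ f(x)` on `[x_crit, ∞)`. -/
theorem lemma9 (m n : ℝ) (hm : 0 < m) (hmn : m < n) (hn : n < 1) (hm2 : n / 2 < m)
    (xcrit : ℝ) (hxc : xcrit < 0) (l : ℕ) (hl : 3 ≤ l) :
    ∃ L : ℝ, 0 < L ∧ ∀ x : ℝ, xcrit ≤ x →
      |x| ^ l / L ≤ (1/n) * Real.exp (n * x) - (1/m) * Real.exp (m * x) + (n - m) / (m * n) := by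
  have hn0 : 0 < n := hm.trans hmn
  set c : ℝ := (n - m) * Real.exp (n * xcrit) / 2 with hc
  have hcpos : 0 < c := by
    have := Real.exp_pos (n * xcrit)
    rw [hc]
    have hnm : (0:ℝ) < n - m := by linarith
    positivity
  have hquad := lemma9_quad m n hm hmn xcrit hxc
  set x₀ : ℝ := Real.log (2 * n / m) / (n - m) with hx₀
  set M : ℝ := max (max (-xcrit) x₀) 1 with hM
  have hM1 : (1:ℝ) ≤ M := le_max_right _ _
  have hMpos : (0:ℝ) < M := lt_of_lt_of_le one_pos hM1
  set L₁ : ℝ := M ^ (l - 2) / c with hL₁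
  set L₂ : ℝ := 2 * (l.factorial : ℝ) / n ^ (l - 1) with hL₂
  have hL₁pos : 0 < L₁ := div_pos (pow_pos hMpos _) hcpos
  have hL₂pos : 0 < L₂ := by
    have : (0:ℝ) < (l.factorial : ℝ) := by exact_mod_cast l.factorial_pos
    rw [hL₂]; positivity
  refine ⟨max L₁ L₂, lt_of_lt_of_le hL₁pos (le_max_left _ _), ?_⟩
  intro x hx
  set F : ℝ := (1/n) * Real.exp (n * x) - (1/m) * Real.exp (m * x) + (n - m) / (m * n) with hF
  have hFq : c * x ^ 2 ≤ F := hquad x hx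
  have hFnonneg : 0 ≤ F := le_trans (by positivity) hFq
  have hLpos : 0 < max L₁ L₂ := lt_of_lt_of_le hL₁pos (le_max_left _ _)
  rw [div_le_iff₀ hLpos]
  have hmain : |x| ^ l ≤ L₁ * F ∨ |x| ^ l ≤ L₂ * F := by
    rcases le_or_gt x M with hxM | hxM
    · left
      have habs : |x| ≤ M := by
        rw [abs_le]
        constructor
        · have : -xcrit ≤ M := le_trans (le_max_left _ _) (le_max_left _ _)
          linarith
        · exact hxM
      have hsplit : |x| ^ l = |x| ^ (l - 2) * |x| ^ 2 := by
        rw [← pow_add]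
        congr 1
        omega
      have h1 : |x| ^ (l - 2) ≤ M ^ (l - 2) := pow_le_pow_left₀ (abs_nonneg x) habs _
      have h2 : |x| ^ 2 = x ^ 2 := sq_abs x
      calc |x| ^ l = |x| ^ (l - 2) * |x| ^ 2 := hsplit
        _ ≤ M ^ (l - 2) * x ^ 2 := by
            rw [h2]; exact mul_le_mul_of_nonneg_right h1 (sq_nonneg x)
        _ = L₁ * (c * x ^ 2) := by rw [hL₁]; field_simp
        _ ≤ L₁ * F := mul_le_mul_of_nonneg_left hFq hL₁pos.le
    · right
      have hxpos : (0:ℝ) < x := lt_of_lt_of_le (lt_of_lt_of_le one_pos hM1) hxM.le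
      -- exp bound : exp(n x)/(2n) ≤ F
      have hxx₀ : x₀ ≤ x := le_trans (le_trans (le_max_right _ _) (le_max_left _ _)) hxM.le
      have hbig : Real.exp (m * x) / m ≤ Real.exp (n * x) / (2 * n) := by
        rw [div_le_div_iff₀ hm (by positivity)]
        have h2nm : (0:ℝ) < 2 * n / m := by positivity
        have hlog : Real.log (2 * n / m) ≤ (n - m) * x := by
          have hnm : 0 < n - m := by linarith
          calc Real.log (2 * n / m) = x₀ * (n - m) := by
                rw [hx₀]; field_simp
            _ ≤ x * (n - m) := mul_le_mul_of_nonneg_right hxx₀ hnm.le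
            _ = (n - m) * x := by ring
        have := Real.exp_le_exp.mpr hlog
        rw [Real.exp_log h2nm] at this
        have hexp : Real.exp (m * x) * (2 * n / m) ≤ Real.exp (m * x) * Real.exp ((n - m) * x) :=
          mul_le_mul_of_nonneg_left this (Real.exp_nonneg _)
        rw [← Real.exp_add] at hexp
        have heq : m * x + (n - m) * x = n * x := by ring
        rw [heq] at hexp
        calc Real.exp (m * x) * (2 * n) = Real.exp (m * x) * (2 * n / m) * m := by field_simp
          _ ≤ Real.exp (n * x) * m := mul_le_mul_of_nonneg_right hexp hm.le
          _ = Real.exp (n * x) * m := rfl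
      have hFexp : Real.exp (n * x) / (2 * n) ≤ F := by
        have hpos : 0 ≤ (n - m) / (m * n) := div_nonneg (by linarith) (by positivity)
        have h6 : (1/m) * Real.exp (m * x) = Real.exp (m * x) / m := by ring
        have h7 : (1/n) * Real.exp (n * x) = 2 * (Real.exp (n * x) / (2 * n)) := by
          field_simp
        rw [hF]
        linarith
      have hpow : (n * x) ^ l / (l.factorial : ℝ) ≤ Real.exp (n * x) :=
        Real.pow_div_factorial_le_exp (x := n * x) (mul_nonneg hn0.le hxpos.le) l
      have habs : |x| = x := abs_of_pos hxpos
      rw [habs]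
      have hfact : (0:ℝ) < (l.factorial : ℝ) := by exact_mod_cast l.factorial_pos
      have hxl : x ^ l ≤ (l.factorial : ℝ) / n ^ l * Real.exp (n * x) := by
        rw [div_le_iff₀ hfact] at hpow
        rw [mul_pow] at hpow
        have hnl : (0:ℝ) < n ^ l := by positivity
        rw [div_mul_eq_mul_div, le_div_iff₀ hnl]
        nlinarith
      have hnl1 : n ^ l = n ^ (l - 1) * n := by
        rw [← pow_succ]
        congr 1
        omega
      calc x ^ l ≤ (l.factorial : ℝ) / n ^ l * Real.exp (n * x) := hxl
        _ = L₂ * (Real.exp (n * x) / (2 * n)) := by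
            rw [hL₂, hnl1]; field_simp
        _ ≤ L₂ * F := mul_le_mul_of_nonneg_left hFexp hL₂pos.le
  rcases hmain with h | h
  · calc |x| ^ l ≤ L₁ * F := h
      _ ≤ max L₁ L₂ * F := mul_le_mul_of_nonneg_right (le_max_left _ _) hFnonneg
      _ = F * max L₁ L₂ := by ring
  · calc |x| ^ l ≤ L₂ * F := h
      _ ≤ max L₁ L₂ * F := mul_le_mul_of_nonneg_right (le_max_right _ _) hFnonneg
      _ = F * max L₁ L₂ := by ring
end

section
/- Let Y : [0,∞) → [0,∞) be continuously differentiable with ∫₀^∞ Y(τ) dτ < ∞, and suppose dY/dt ≤ K·Y(t) + H(t) for all t, where K > 0 is a constant and H is a non-negative integrable function on [0,∞). Then lim_{t→∞} Y(t) = 0. -/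
open MeasureTheory Set Filter

/-- Tail of the integral of a nonnegative integrable function tends to zero. -/
lemma aux_tail_tendsto_zero (f : ℝ → ℝ) (hf : IntegrableOn f (Ici 0))
    (hnn : ∀ t ∈ Ici (0:ℝ), 0 ≤ f t) :
    Tendsto (fun T => ∫ x in Ioi T, f x) atTop (nhds 0) := by
  have hfi : IntegrableOn f (Ioi 0) := hf.mono_set Ioi_subset_Ici_self
  have h1 : Tendsto (fun T => ∫ x in (0:ℝ)..T, f x) atTop (nhds (∫ x in Ioi (0:ℝ), f x)) :=
    intervalIntegral_tendsto_integral_Ioi 0 hfi tendsto_id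
  have h2 : Tendsto (fun T => (∫ x in Ioi (0:ℝ), f x) - ∫ x in (0:ℝ)..T, f x) atTop (nhds 0) := by
    simpa using h1.const_sub (∫ x in Ioi (0:ℝ), f x)
  refine h2.congr' ?_
  filter_upwards [eventually_ge_atTop (0:ℝ)] with T hT
  have hunion : Ioc (0:ℝ) T ∪ Ioi T = Ioi 0 := Ioc_union_Ioi_eq_Ioi hT
  have hdisj : Disjoint (Ioc (0:ℝ) T) (Ioi T) := Ioc_disjoint_Ioi le_rfl
  have hsplit : (∫ x in Ioi (0:ℝ), f x) =
      (∫ x in Ioc (0:ℝ) T, f x) + ∫ x in Ioi T, f x := by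
    rw [← hunion, setIntegral_union hdisj measurableSet_Ioi
      (hfi.mono_set (by rw [← hunion]; exact subset_union_left))
      (hfi.mono_set (by rw [← hunion]; exact subset_union_right))]
  rw [intervalIntegral.integral_of_le hT, hsplit]
  ring

/-- A non-negative C¹ function with finite integral satisfying `Y' ≤ K Y + H`
with `H` integrable tends to zero at infinity. -/
theorem tendsto_zero_of_integrable_and_growth
    (Y Y' H : ℝ → ℝ) (K : ℝ) (hK : 0 < K)
    (hY_nonneg : ∀ t ∈ Ici (0:ℝ), 0 ≤ Y t)
    (hY_deriv : ∀ t ∈ Ici (0:ℝ), HasDerivAt Y (Y' t) t)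
    (hY'_cont : ContinuousOn Y' (Ici 0))
    (hY_int : IntegrableOn Y (Ici 0))
    (hH_nonneg : ∀ t ∈ Ici (0:ℝ), 0 ≤ H t)
    (hH_int : IntegrableOn H (Ici 0))
    (hineq : ∀ t ∈ Ici (0:ℝ), Y' t ≤ K * Y t + H t) :
    Tendsto Y atTop (nhds 0) := by
  -- continuity of Y on [0,∞)
  have hYcont : ContinuousOn Y (Ici 0) := fun t ht =>
    (hY_deriv t ht).continuousAt.continuousWithinAt
  -- Key Grönwall-type inequality
  have key : ∀ s t : ℝ, 0 ≤ s → s ≤ t →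
      Real.exp (-K*t) * Y t ≤ Real.exp (-K*s) * Y s +
        ∫ u in s..t, Real.exp (-K*u) * H u := by
    intro s t hs hst
    have hIcc : Icc s t ⊆ Ici (0:ℝ) := fun u hu => hs.trans hu.1
    have hF : ∀ u ∈ Icc s t,
        HasDerivAt (fun u => Real.exp (-K*u) * Y u)
          (Real.exp (-K*u) * (Y' u - K * Y u)) u := by
      intro u hu
      have hd := hY_deriv u (hIcc hu)
      have he : HasDerivAt (fun u : ℝ => Real.exp (-K*u)) (Real.exp (-K*u) * (-K)) u := by
        simpa using ((hasDerivAt_id u).const_mul (-K)).exp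
      have := he.mul hd
      exact this.congr_deriv (by ring)
    have hcontexp : Continuous (fun u : ℝ => Real.exp (-K*u)) :=
      Real.continuous_exp.comp (continuous_const.mul continuous_id)
    have hintF' : IntervalIntegrable
        (fun u => Real.exp (-K*u) * (Y' u - K * Y u)) volume s t := by
      apply ContinuousOn.intervalIntegrable
      rw [uIcc_of_le hst]
      exact hcontexp.continuousOn.mul
        (((hY'_cont.mono hIcc).sub ((continuousOn_const.mul (hYcont.mono hIcc)))))
    have hintRHS : IntervalIntegrable (fun u => Real.exp (-K*u) * H u) volume s t := by
      rw [intervalIntegrable_iff_integrableOn_Icc_of_le hst]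
      exact IntegrableOn.continuousOn_mul hcontexp.continuousOn
        (hH_int.mono_set hIcc) isCompact_Icc
    have hftc : (∫ u in s..t, Real.exp (-K*u) * (Y' u - K * Y u)) =
        Real.exp (-K*t) * Y t - Real.exp (-K*s) * Y s := by
      apply intervalIntegral.integral_eq_sub_of_hasDerivAt
      · intro u hu
        exact hF u (by rwa [uIcc_of_le hst] at hu)
      · exact hintF'
    have hmono : (∫ u in s..t, Real.exp (-K*u) * (Y' u - K * Y u)) ≤
        ∫ u in s..t, Real.exp (-K*u) * H u := by
      apply intervalIntegral.integral_mono_on hst hintF' hintRHS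
      intro u hu
      have h1 : Y' u ≤ K * Y u + H u := hineq u (hIcc hu)
      have h2 : (0:ℝ) < Real.exp (-K*u) := Real.exp_pos _
      nlinarith
    linarith [hftc ▸ hmono]
  -- contradiction argument
  by_contra hcon
  rw [Metric.tendsto_atTop] at hcon
  push_neg at hcon
  obtain ⟨ε, hε, hfreq⟩ := hcon
  set c : ℝ := Real.exp (-K) * ε / 2 with hc_def
  have hc : 0 < c := by positivity
  have tailY := aux_tail_tendsto_zero Y hY_int hY_nonneg
  have tailH := aux_tail_tendsto_zero H hH_int hH_nonneg
  have hev : ∀ᶠ T in atTop, ((∫ x in Ioi T, Y x) < c ∧ (∫ x in Ioi T, H x) < c) ∧ 0 ≤ T :=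
    (((tendsto_order.1 tailY).2 c hc).and ((tendsto_order.1 tailH).2 c hc)).and
      (eventually_ge_atTop 0)
  obtain ⟨T, ⟨hTY, hTH⟩, hT0⟩ := hev.exists
  obtain ⟨t₀, ht₀T, ht₀d⟩ := hfreq (T + 2)
  have ht₀0 : (0:ℝ) ≤ t₀ := by linarith
  have hYt₀ : ε ≤ Y t₀ := by
    rwa [Real.dist_eq, sub_zero, abs_of_nonneg (hY_nonneg t₀ ht₀0)] at ht₀d
  -- lower bound for Y on [t₀-1, t₀]
  have lower : ∀ t ∈ Icc (t₀ - 1) t₀, c ≤ Y t := by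
    intro t ht
    have htT : T + 1 ≤ t := by linarith [ht.1]
    have ht0 : (0:ℝ) ≤ t := by linarith
    have hk := key t t₀ ht0 ht.2
    -- bound the integral term
    have hIH : (∫ u in t..t₀, Real.exp (-K*u) * H u) ≤
        Real.exp (-K*t) * ∫ x in Ioi T, H x := by
      have hintH : IntervalIntegrable H volume t t₀ := by
        rw [intervalIntegrable_iff_integrableOn_Icc_of_le ht.2]
        exact hH_int.mono_set (fun u hu => ht0.trans hu.1)
      have hintLHS : IntervalIntegrable (fun u => Real.exp (-K*u) * H u) volume t t₀ := by
        rw [intervalIntegrable_iff_integrableOn_Icc_of_le ht.2]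
        exact IntegrableOn.continuousOn_mul
          (Real.continuous_exp.comp (continuous_const.mul continuous_id)).continuousOn
          (hH_int.mono_set (fun u hu => ht0.trans hu.1)) isCompact_Icc
      have step1 : (∫ u in t..t₀, Real.exp (-K*u) * H u) ≤
          ∫ u in t..t₀, Real.exp (-K*t) * H u := by
        apply intervalIntegral.integral_mono_on ht.2 hintLHS
          (hintH.const_mul _)
        intro u hu
        have : Real.exp (-K*u) ≤ Real.exp (-K*t) :=
          Real.exp_le_exp.2 (by nlinarith [hu.1])
        exact mul_le_mul_of_nonneg_right this (hH_nonneg u (ht0.trans hu.1))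
      have step2 : (∫ u in t..t₀, Real.exp (-K*t) * H u) =
          Real.exp (-K*t) * ∫ u in t..t₀, H u := by
        rw [intervalIntegral.integral_const_mul]
      have step3 : (∫ u in t..t₀, H u) ≤ ∫ x in Ioi T, H x := by
        rw [intervalIntegral.integral_of_le ht.2]
        apply setIntegral_mono_set (hH_int.mono_set (fun u hu => le_of_lt
            (lt_of_le_of_lt hT0 hu)))
        · exact (ae_restrict_iff' measurableSet_Ioi).2 (ae_of_all _
            (fun u hu => hH_nonneg u (le_of_lt (lt_of_le_of_lt hT0 hu))))
        · exact HasSubset.Subset.eventuallyLE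
            (fun u hu => lt_trans (by linarith : T < t) hu.1)
      calc (∫ u in t..t₀, Real.exp (-K*u) * H u)
          ≤ ∫ u in t..t₀, Real.exp (-K*t) * H u := step1
        _ = Real.exp (-K*t) * ∫ u in t..t₀, H u := step2
        _ ≤ Real.exp (-K*t) * ∫ x in Ioi T, H x :=
            mul_le_mul_of_nonneg_left step3 (Real.exp_pos _).le
    have hk2 : Real.exp (-K*t₀) * Y t₀ ≤
        Real.exp (-K*t) * (Y t + ∫ x in Ioi T, H x) := by
      have := hk.trans (by linarith : Real.exp (-K*t) * Y t +
        (∫ u in t..t₀, Real.exp (-K*u) * H u) ≤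
        Real.exp (-K*t) * Y t + Real.exp (-K*t) * ∫ x in Ioi T, H x)
      linarith [this]
    -- multiply by exp(K t)
    have h5 : Real.exp (K*t - K*t₀) * Y t₀ ≤ Y t + ∫ x in Ioi T, H x := by
      have hpos : (0:ℝ) < Real.exp (K*t) := Real.exp_pos _
      have := mul_le_mul_of_nonneg_left hk2 hpos.le
      have e1 : Real.exp (K*t) * (Real.exp (-K*t₀) * Y t₀) =
          Real.exp (K*t - K*t₀) * Y t₀ := by
        rw [← mul_assoc, ← Real.exp_add]; ring_nf
      have e2 : Real.exp (K*t) * (Real.exp (-K*t) * (Y t + ∫ x in Ioi T, H x)) =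
          Y t + ∫ x in Ioi T, H x := by
        rw [← mul_assoc, ← Real.exp_add]; ring_nf; simp
      rw [e1, e2] at this
      exact this
    have h6 : Real.exp (-K) * ε ≤ Real.exp (K*t - K*t₀) * Y t₀ := by
      apply mul_le_mul (Real.exp_le_exp.2 (by nlinarith [ht.1])) hYt₀ hε.le
        (Real.exp_pos _).le
    linarith [hTH]
  -- derive contradiction via integral over [t₀-1,t₀]
  have hsub : Icc (t₀ - 1) t₀ ⊆ Ioi T := fun u hu => lt_of_lt_of_le
    (by linarith : T < t₀ - 1) hu.1
  have hYIoi : IntegrableOn Y (Ioi T) :=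
    hY_int.mono_set (fun u hu => le_of_lt (lt_of_le_of_lt hT0 hu))
  have h1 : (∫ x in Icc (t₀-1) t₀, (c:ℝ)) ≤ ∫ x in Icc (t₀-1) t₀, Y x := by
    apply setIntegral_mono_on (integrableOn_const (by
      rw [Real.volume_Icc]; exact ENNReal.ofReal_ne_top))
      (hYIoi.mono_set hsub) measurableSet_Icc
    exact lower
  have h2 : (∫ x in Icc (t₀-1) t₀, (c:ℝ)) = c := by
    rw [setIntegral_const, Real.volume_real_Icc]
    norm_num
  have h3 : (∫ x in Icc (t₀-1) t₀, Y x) ≤ ∫ x in Ioi T, Y x := by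
    apply setIntegral_mono_set hYIoi
    · exact (ae_restrict_iff' measurableSet_Ioi).2 (ae_of_all _
        (fun u hu => hY_nonneg u (le_of_lt (lt_of_le_of_lt hT0 hu))))
    · exact HasSubset.Subset.eventuallyLE hsub
  linarith [hTY]
end
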